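/- arXiv:2110.09732 — 2 statements merged into one kernel-verified Lean document; each statement's English description precedes it below -/
import Mathlib

section
/- The eternal domination number of the 5-cycle C₅ is 3, while its independence number is 2; moreover, C₅ is the smallest graph (in number of vertices) whose independence number is strictly less than its eternal domination number. -/
open SimpleGraph

variable {V : Type*}

/-- `D` is a dominating set of `G`. -/
def IsDomSet (G : SimpleGraph V) (D : Finset V) : Prop :=
  ∀ v : V, ∃ u ∈ D, u = v ∨ G.Adj u v

/-- A family of guard configurations closed under defending any attack: every member
of the family is a dominating set, and for every attack on an unguarded vertex `v`
some guard on a neighbour of `v` can move to `v` so that the resulting configuration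
is again in the family.  The defender can perpetually defend every infinite sequence
of attacks starting from `D` iff `D` belongs to such a family. -/
def IsEDFamily [DecidableEq V] (G : SimpleGraph V) (F : Set (Finset V)) : Prop :=
  ∀ D ∈ F, IsDomSet G D ∧
    ∀ v ∉ D, ∃ u ∈ D, G.Adj u v ∧ insert v (D.erase u) ∈ F

/-- The eternal domination number `γ∞(G)`: the least number of guards admitting a
winning defence strategy. -/
noncomputable def eternalDomNum [DecidableEq V] (G : SimpleGraph V) : ℕ :=
  sInf {k | ∃ F : Set (Finset V), F.Nonempty ∧ (∀ D ∈ F, D.card = k) ∧ IsEDFamily G F}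

/-- The independence number `α(G)`. -/
noncomputable def indepNum (G : SimpleGraph V) : ℕ :=
  sSup {k | ∃ s : Finset V, s.card = k ∧ ∀ u ∈ s, ∀ v ∈ s, ¬ G.Adj u v}

/-- The clique covering number `θ(G)`: the least `k` such that the vertex set can be
partitioned into `k` cliques, i.e. the complement of `G` is properly `k`-colourable. -/
noncomputable def cliqueCoverNum (G : SimpleGraph V) : ℕ :=
  sInf {k | Nonempty (Gᶜ.Coloring (Fin k))}

/-- The domination number `γ(G)`. -/
noncomputable def domNum (G : SimpleGraph V) : ℕ :=
  sInf {k | ∃ D : Finset V, D.card = k ∧ IsDomSet G D}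

/-! Guards placed one on each clique of a partition of the vertices into cliques defend forever:
an attacked vertex is taken by the guard of its own clique. Hence `γ∞ ≤ θ`. On at most four
vertices `θ = α`: this is immediate when `α ≥ n - 1`, the graph is complete when `α = 1`, and on
four vertices with `α = 2` the absence of three independent vertices forces a perfect matching or
a triangle. For `C₅` the cliques `{0, 1}, {2, 3}, {4}` give `γ∞ ≤ 3`. Two guards dominate `C₅` only
from two vertices at distance two, and after an attack on the vertex between them either move
leaves two adjacent guards, which do not dominate. -/

variable {W : Type*} {G : SimpleGraph V}

theorem indepNum_eq_simpleGraph_indepNum : _root_.indepNum G = G.indepNum := by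
  unfold _root_.indepNum SimpleGraph.indepNum
  congr 1; ext k
  refine exists_congr fun s => ⟨fun ⟨hcard, hs⟩ => ⟨fun u hu w hw _ => hs u hu w hw, hcard⟩,
    fun ⟨hs, hcard⟩ => ⟨hcard, fun u hu w hw huw => ?_⟩⟩
  exact hs hu hw (G.ne_of_adj huw) huw

theorem card_le_indepNum_of_isIndepSet [Finite V] {s : Finset V} (hs : G.IsIndepSet s) :
    s.card ≤ _root_.indepNum G :=
  indepNum_eq_simpleGraph_indepNum ▸ hs.card_le_indepNum

theorem indepNum_le_of_forall_isIndepSet {k : ℕ}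
    (h : ∀ s : Finset V, G.IsIndepSet s → s.card ≤ k) : _root_.indepNum G ≤ k := by
  obtain ⟨s, hs⟩ := G.exists_isNIndepSet_indepNum
  rw [indepNum_eq_simpleGraph_indepNum, ← hs.card_eq]
  exact h s hs.isIndepSet

theorem exists_adj_of_indepNum_lt_card [Finite V] {s : Finset V}
    (h : _root_.indepNum G < s.card) : ∃ u ∈ s, ∃ w ∈ s, G.Adj u w := by
  by_contra! hs
  exact h.not_ge (card_le_indepNum_of_isIndepSet fun u hu w hw _ => hs u hu w hw)

theorem cliqueCoverNum_le_of_coloring [Fintype W] (C : Gᶜ.Coloring W) :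
    cliqueCoverNum G ≤ Fintype.card W :=
  Nat.sInf_le C.colorable

theorem nonempty_coloring_cliqueCoverNum [Fintype V] :
    Nonempty (Gᶜ.Coloring (Fin (cliqueCoverNum G))) :=
  Nat.sInf_mem (s := {k | Nonempty (Gᶜ.Coloring (Fin k))}) ⟨_, Gᶜ.colorable_of_fintype⟩

theorem cliqueCoverNum_le_card [Fintype V] : cliqueCoverNum G ≤ Fintype.card V :=
  cliqueCoverNum_le_of_coloring Gᶜ.selfColoring

theorem cliqueCoverNum_le_card_sub_one_of_adj [Fintype V] [DecidableEq V] {a b : V}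
    (hab : G.Adj a b) : cliqueCoverNum G ≤ Fintype.card V - 1 := by
  let C : Gᶜ.Coloring {w // w ≠ b} := Coloring.mk
    (fun w => if hw : w = b then ⟨a, hab.ne⟩ else ⟨w, hw⟩) fun {u w} huw => by
      rw [compl_adj] at huw
      by_cases hu : u = b <;> by_cases hw : w = b <;> simp only [hu, hw, dite_true, dite_false,
        ne_eq, Subtype.mk.injEq] at huw ⊢
      all_goals grind [G.adj_symm]
  simpa [Fintype.card_subtype_compl] using cliqueCoverNum_le_of_coloring C

theorem cliqueCoverNum_le_indepNum_of_card_le_succ [Fintype V]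
    (h : Fintype.card V ≤ _root_.indepNum G + 1) : cliqueCoverNum G ≤ _root_.indepNum G := by
  classical
  rcases h.lt_or_eq with h | h
  · exact cliqueCoverNum_le_card.trans (Nat.le_of_lt_succ h)
  · obtain ⟨a, -, b, -, hab⟩ := exists_adj_of_indepNum_lt_card (G := G) (s := Finset.univ)
      (by rw [Finset.card_univ, h]; omega)
    have := cliqueCoverNum_le_card_sub_one_of_adj hab
    omega

theorem cliqueCoverNum_le_one_of_indepNum_le_one [Finite V] (h : _root_.indepNum G ≤ 1) :
    cliqueCoverNum G ≤ 1 := by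
  classical
  refine cliqueCoverNum_le_of_coloring (W := Unit) (Coloring.mk (fun _ => ()) fun {u w} huw => ?_)
  have hind : G.IsIndepSet (({u, w} : Finset V) : Set V) := by
    rw [Finset.coe_pair, ← isClique_compl]
    exact isClique_pair.2 fun _ => huw
  have := (card_le_indepNum_of_isIndepSet hind).trans h
  rw [Finset.card_pair huw.ne] at this
  omega

theorem cliqueCoverNum_le_two_of_isClique_cover (K L : Set V) (hK : G.IsClique K)
    (hL : G.IsClique L) (hcover : ∀ v, v ∈ K ∨ v ∈ L) : cliqueCoverNum G ≤ 2 := by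
  classical
  refine cliqueCoverNum_le_of_coloring (W := Bool) (Coloring.mk (fun v => decide (v ∈ K))
    fun {u w} huw => ?_)
  rw [compl_adj] at huw
  by_cases hu : u ∈ K <;> by_cases hw : w ∈ K <;> simp only [hu, hw, ne_eq, decide_true,
    decide_false, not_false_eq_true, Bool.true_eq_false, Bool.false_eq_true, not_true_eq_false]
  · exact huw.2 (hK hu hw huw.1)
  · exact huw.2 (hL ((hcover u).resolve_left hu) ((hcover w).resolve_left hw) huw.1)

theorem adj_or_adj_or_adj_of_indepNum_le_two [Finite V] (h : _root_.indepNum G ≤ 2) {x y z : V}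
    (hxy : x ≠ y) (hxz : x ≠ z) (hyz : y ≠ z) : G.Adj x y ∨ G.Adj x z ∨ G.Adj y z := by
  classical
  obtain ⟨u, hu, w, hw, huw⟩ := exists_adj_of_indepNum_lt_card (G := G) (s := {x, y, z})
    (by rw [Finset.card_eq_three.2 ⟨x, y, z, hxy, hxz, hyz, rfl⟩]; omega)
  simp only [Finset.mem_insert, Finset.mem_singleton] at hu hw
  rcases hu with rfl | rfl | rfl <;> rcases hw with rfl | rfl | rfl <;>
    simp_all [G.adj_comm]

theorem cliqueCoverNum_le_two_of_card_eq_four [Fintype V] (h4 : Fintype.card V = 4)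
    (hα : _root_.indepNum G ≤ 2) : cliqueCoverNum G ≤ 2 := by
  classical
  obtain ⟨a, b, c, d, hab, hac, had, hbc, hbd, hcd, huniv⟩ :=
    Finset.card_eq_four.1 (Finset.card_univ.trans h4)
  have hcover (v : V) : v = a ∨ v = b ∨ v = c ∨ v = d := by
    have hv := Finset.mem_univ v
    rw [huniv] at hv
    simpa using hv
  have matching {x y z w : V} (hxy : G.Adj x y) (hzw : G.Adj z w)
      (h : ∀ v, v = x ∨ v = y ∨ v = z ∨ v = w) : cliqueCoverNum G ≤ 2 :=
    cliqueCoverNum_le_two_of_isClique_cover {x, y} {z, w} (isClique_pair.2 fun _ => hxy)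
      (isClique_pair.2 fun _ => hzw) (by simpa [or_assoc] using h)
  have triangle {x y z w : V} (hxy : G.Adj x y) (hxz : G.Adj x z) (hyz : G.Adj y z)
      (h : ∀ v, v = x ∨ v = y ∨ v = z ∨ v = w) : cliqueCoverNum G ≤ 2 :=
    cliqueCoverNum_le_two_of_isClique_cover {x, y, z} {w}
      (by simp [isClique_insert, hxy, hxz, hyz])
      (isClique_singleton w) (by simpa [or_assoc] using h)
  have habc := adj_or_adj_or_adj_of_indepNum_le_two hα hab hac hbc
  have habd := adj_or_adj_or_adj_of_indepNum_le_two hα hab had hbd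
  have hacd := adj_or_adj_or_adj_of_indepNum_le_two hα hac had hcd
  have hbcd := adj_or_adj_or_adj_of_indepNum_le_two hα hbc hbd hcd
  have : G.Adj a b ∧ G.Adj c d ∨ G.Adj a c ∧ G.Adj b d ∨ G.Adj a d ∧ G.Adj b c ∨
      G.Adj a b ∧ G.Adj a c ∧ G.Adj b c ∨ G.Adj a b ∧ G.Adj a d ∧ G.Adj b d ∨
      G.Adj a c ∧ G.Adj a d ∧ G.Adj c d ∨ G.Adj b c ∧ G.Adj b d ∧ G.Adj c d := by
    grind
  rcases this with ⟨h₁, h₂⟩ | ⟨h₁, h₂⟩ | ⟨h₁, h₂⟩ | ⟨h₁, h₂, h₃⟩ | ⟨h₁, h₂, h₃⟩ | ⟨h₁, h₂, h₃⟩ |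
    ⟨h₁, h₂, h₃⟩
  · exact matching h₁ h₂ hcover
  · exact matching h₁ h₂ fun v => by simpa only [or_comm, or_left_comm] using hcover v
  · exact matching h₁ h₂ fun v => by simpa only [or_comm, or_left_comm] using hcover v
  · exact triangle h₁ h₂ h₃ hcover
  · exact triangle (w := c) h₁ h₂ h₃ fun v => by simpa only [or_comm, or_left_comm] using hcover v
  · exact triangle (w := b) h₁ h₂ h₃ fun v => by simpa only [or_comm, or_left_comm] using hcover v
  · exact triangle (w := a) h₁ h₂ h₃ fun v => by simpa only [or_comm, or_left_comm] using hcover v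

theorem cliqueCoverNum_le_indepNum_of_card_le_four [Fintype V] (h : Fintype.card V ≤ 4) :
    cliqueCoverNum G ≤ _root_.indepNum G := by
  by_cases hsucc : Fintype.card V ≤ _root_.indepNum G + 1
  · exact cliqueCoverNum_le_indepNum_of_card_le_succ hsucc
  obtain ⟨v⟩ : Nonempty V := Fintype.card_pos_iff.1 (by omega)
  have hpos : 1 ≤ _root_.indepNum G := by
    simpa using card_le_indepNum_of_isIndepSet (G := G) (s := {v}) (by simp)
  rcases (show _root_.indepNum G = 1 ∨ _root_.indepNum G = 2 by omega) with hα | hα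
  · exact hα ▸ cliqueCoverNum_le_one_of_indepNum_le_one hα.le
  · exact hα ▸ cliqueCoverNum_le_two_of_card_eq_four (by omega) hα.le

theorem eternalDomNum_le_of_coloring [Fintype V] [DecidableEq V] [Fintype W] [DecidableEq W]
    (C : Gᶜ.Coloring W) : eternalDomNum G ≤ Fintype.card W := by
  -- one guard on each clique of the partition into colour classes
  set colours := Finset.univ.image C
  let F : Set (Finset V) := {D | D.image C = colours ∧ D.card = colours.card}
  have hdom : ∀ D ∈ F, ∀ v, ∃ u ∈ D, C u = C v := by
    rintro D ⟨himage, -⟩ v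
    have hv : C v ∈ D.image C := himage ▸ Finset.mem_image_of_mem C (Finset.mem_univ v)
    simpa using hv
  have hadj {u v : V} (huv : u ≠ v) (hC : C u = C v) : G.Adj u v := by
    by_contra h
    exact C.valid ((compl_adj G u v).2 ⟨huv, h⟩) hC
  refine le_trans (Nat.sInf_le ?_) (Finset.card_le_univ colours)
  refine ⟨F, ?_, fun D hD => hD.2, fun D hD => ⟨?_, ?_⟩⟩
  · obtain ⟨D, -, hinj, himage⟩ :=
      Finset.exists_subset_injOn_image_eq_of_surjOn Set.univ colours fun c hc => by
        simpa [colours] using hc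
    exact ⟨D, himage, himage ▸ (Finset.card_image_iff.2 hinj).symm⟩
  · intro v
    obtain ⟨u, hu, hC⟩ := hdom D hD v
    exact ⟨u, hu, (eq_or_ne u v).imp_right fun huv => hadj huv hC⟩
  · intro v hv
    obtain ⟨u, hu, hC⟩ := hdom D hD v
    have huv : u ≠ v := fun h => hv (h ▸ hu)
    refine ⟨u, hu, hadj huv hC, ?_, ?_⟩
    · calc (insert v (D.erase u)).image C = (insert u (D.erase u)).image C := by
            simp only [Finset.image_insert, hC]
        _ = colours := by rw [Finset.insert_erase hu, hD.1]
    · rw [Finset.card_insert_of_notMem (fun h => hv (Finset.mem_of_mem_erase h)),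
        Finset.card_erase_add_one hu, hD.2]

theorem eternalDomNum_le_cliqueCoverNum [Fintype V] [DecidableEq V] :
    eternalDomNum G ≤ cliqueCoverNum G := by
  obtain ⟨C⟩ := nonempty_coloring_cliqueCoverNum (G := G)
  simpa using eternalDomNum_le_of_coloring C

theorem exists_isEDFamily_eternalDomNum [Fintype V] [DecidableEq V] :
    ∃ F : Set (Finset V), F.Nonempty ∧ (∀ D ∈ F, D.card = eternalDomNum G) ∧ IsEDFamily G F := by
  refine Nat.sInf_mem (s := {k | ∃ F : Set (Finset V), F.Nonempty ∧ (∀ D ∈ F, D.card = k) ∧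
    IsEDFamily G F}) ⟨Finset.univ.card, {Finset.univ}, Set.singleton_nonempty _,
      fun D hD => by rw [Set.mem_singleton_iff.1 hD], ?_⟩
  rintro D rfl
  exact ⟨fun v => ⟨v, Finset.mem_univ v, Or.inl rfl⟩, fun v hv => absurd (Finset.mem_univ v) hv⟩

theorem le_eternalDomNum_of_forall_card_lt [Fintype V] [DecidableEq V] {k : ℕ}
    (h : ∀ D : Finset V, D.card < k → IsDomSet G D →
      ∃ v ∉ D, ∀ u ∈ D, G.Adj u v → ¬ IsDomSet G (insert v (D.erase u))) :
    k ≤ eternalDomNum G := by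
  by_contra! hlt
  obtain ⟨F, ⟨D, hD⟩, hcard, hF⟩ := exists_isEDFamily_eternalDomNum (G := G)
  obtain ⟨v, hv, hlost⟩ := h D (hcard D hD ▸ hlt) (hF D hD).1
  obtain ⟨u, hu, huv, hD'⟩ := (hF D hD).2 v hv
  exact hlost u hu huv (hF _ hD').1

instance IsDomSet.decidable [Fintype V] [DecidableEq V] [DecidableRel G.Adj] (D : Finset V) :
    Decidable (IsDomSet G D) := by
  unfold IsDomSet; infer_instance

theorem cliqueCoverNum_cycleGraph_five_le : cliqueCoverNum (cycleGraph 5) ≤ 3 :=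
  cliqueCoverNum_le_of_coloring (W := Fin 3) (Coloring.mk (fun i => ⟨i / 2, by omega⟩) (by decide))

theorem three_le_eternalDomNum_cycleGraph_five : 3 ≤ eternalDomNum (cycleGraph 5) :=
  le_eternalDomNum_of_forall_card_lt (by decide)

theorem indepNum_cycleGraph_five : _root_.indepNum (cycleGraph 5) = 2 :=
  le_antisymm (indepNum_le_of_forall_isIndepSet (by decide))
    (card_le_indepNum_of_isIndepSet (G := cycleGraph 5) (s := {0, 2}) (by decide))

/-- `γ∞(C₅) = 3` while `α(C₅) = 2`, and `C₅` is a smallest graph (in number of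
vertices) whose independence number is strictly less than its eternal domination
number. -/
theorem cycle5_eternalDomNum :
    eternalDomNum (SimpleGraph.cycleGraph 5) = 3 ∧
    _root_.indepNum (SimpleGraph.cycleGraph 5) = 2 ∧
    ∀ (W : Type) [Fintype W] [DecidableEq W] (G : SimpleGraph W),
      Fintype.card W < 5 → ¬ _root_.indepNum G < eternalDomNum G := by
  refine ⟨le_antisymm (eternalDomNum_le_cliqueCoverNum.trans cliqueCoverNum_cycleGraph_five_le)
    three_le_eternalDomNum_cycleGraph_five, indepNum_cycleGraph_five, ?_⟩
  intro W _ _ G hcard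
  exact not_lt.2 (eternalDomNum_le_cliqueCoverNum.trans
    (cliqueCoverNum_le_indepNum_of_card_le_four (by omega)))
end

section
/- The 5-vertex 'house' graph G₁ with vertices u₀, u₁, u₂, u₃, u₄ and edges u₀u₁, u₀u₄, u₁u₂, u₁u₄, u₂u₃, u₃u₄ satisfies γ(G₁) = γ∞(G₁) = θ(G₁) = 2, yet the minimum dominating set {u₁, u₄} is not an eternal dominating set of G₁. -/
open SimpleGraph

variable {V : Type*}

/-- `D` is an eternal dominating set of `G`: guards placed on `D` can defend every
infinite sequence of attacks. -/
def IsEternalDomSet [DecidableEq V] (G : SimpleGraph V) (D : Finset V) : Prop :=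
  ∃ F : Set (Finset V), IsEDFamily G F ∧ D ∈ F ∧ ∀ D' ∈ F, D'.card = D.card

/-- The 5-vertex house graph. -/
def houseGraph : SimpleGraph (Fin 5) :=
  SimpleGraph.fromRel (fun i j =>
    (i = 0 ∧ j = 1) ∨ (i = 0 ∧ j = 4) ∨ (i = 1 ∧ j = 2) ∨
    (i = 1 ∧ j = 4) ∨ (i = 2 ∧ j = 3) ∨ (i = 3 ∧ j = 4))

/-!
The dominating set `{u₁, u₄}` and the clique partition `{u₀, u₁, u₄}`, `{u₂, u₃}` give
`γ, θ ≤ 2`; no vertex dominates the house and it is not complete, so both equal 2. As `γ ≤ γ∞`,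
it remains to defend with two guards: the dominating pairs other than `{u₁, u₄}` are closed
under defending attacks. From `{u₁, u₄}` itself, an attack on `u₀` must be answered from `u₁`
(leaving `u₂` undominated) or from `u₄` (leaving `u₃` undominated).
-/

section

variable {G : SimpleGraph V}

instance IsDomSet.decidablePred [Fintype V] [DecidableEq V] [DecidableRel G.Adj] :
    DecidablePred (IsDomSet G) :=
  fun D => inferInstanceAs (Decidable (∀ v, ∃ u ∈ D, u = v ∨ G.Adj u v))

theorem domNum_eq_card {D : Finset V} (hD : IsDomSet G D)
    (hmin : ∀ D' : Finset V, IsDomSet G D' → D.card ≤ D'.card) : domNum G = D.card :=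
  IsLeast.csInf_eq ⟨⟨D, rfl, hD⟩, by rintro _ ⟨D', rfl, hD'⟩; exact hmin D' hD'⟩

theorem domNum_le_card {D : Finset V} (hD : IsDomSet G D) : domNum G ≤ D.card :=
  Nat.sInf_le ⟨D, rfl, hD⟩

theorem cliqueCoverNum_le {k : ℕ} (C : Gᶜ.Coloring (Fin k)) : cliqueCoverNum G ≤ k :=
  Nat.sInf_le ⟨C⟩

theorem two_le_cliqueCoverNum [Finite V] {u v : V} (hne : u ≠ v) (hnadj : ¬ G.Adj u v) :
    2 ≤ cliqueCoverNum G := by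
  have := Fintype.ofFinite V
  refine le_csInf ⟨_, Gᶜ.colorable_of_fintype⟩ fun k ⟨C⟩ => ?_
  have hcolours : C u ≠ C v := C.valid ⟨hne, hnadj⟩
  by_contra! hk
  exact hcolours (Fin.ext (by omega))

variable [DecidableEq V]

theorem IsEDFamily.eternalDomNum_le {F : Set (Finset V)} {k : ℕ} (hF : IsEDFamily G F)
    (hne : F.Nonempty) (hcard : ∀ D ∈ F, D.card = k) : eternalDomNum G ≤ k :=
  Nat.sInf_le ⟨F, hne, hcard, hF⟩

theorem isEDFamily_singleton_univ [Fintype V] : IsEDFamily G {Finset.univ} := by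
  rintro D rfl
  exact ⟨fun v => ⟨v, Finset.mem_univ v, Or.inl rfl⟩,
    fun v hv => absurd (Finset.mem_univ v) hv⟩

theorem domNum_le_eternalDomNum [Fintype V] : domNum G ≤ eternalDomNum G := by
  obtain ⟨F, ⟨D, hD⟩, hcard, hF⟩ : eternalDomNum G ∈ {k | ∃ F : Set (Finset V),
      F.Nonempty ∧ (∀ D ∈ F, D.card = k) ∧ IsEDFamily G F} :=
    Nat.sInf_mem ⟨_, {Finset.univ}, Set.singleton_nonempty _, fun _ h => congrArg Finset.card h,
      isEDFamily_singleton_univ⟩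
  exact hcard D hD ▸ domNum_le_card (hF D hD).1

theorem IsEternalDomSet.isDomSet {D : Finset V} (hD : IsEternalDomSet G D) : IsDomSet G D :=
  let ⟨_, hF, hDF, _⟩ := hD
  (hF D hDF).1

theorem IsEternalDomSet.exists_defence {D : Finset V} (hD : IsEternalDomSet G D) {v : V}
    (hv : v ∉ D) : ∃ u ∈ D, G.Adj u v ∧ IsEternalDomSet G (insert v (D.erase u)) := by
  obtain ⟨F, hF, hDF, hcard⟩ := hD
  obtain ⟨u, hu, huv, hmove⟩ := (hF D hDF).2 v hv
  refine ⟨u, hu, huv, F, hF, hmove, fun D' hD' => ?_⟩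
  rw [hcard D' hD', hcard _ hmove]

end

instance : DecidableRel houseGraph.Adj := fun a b =>
  decidable_of_iff' _ (fromRel_adj _ a b)

theorem houseGraph_two_le_card_of_isDomSet :
    ∀ D : Finset (Fin 5), IsDomSet houseGraph D → 2 ≤ D.card := by
  decide

def houseGuardFamily : Finset (Finset (Fin 5)) :=
  (Finset.univ.powersetCard 2).filter fun D => IsDomSet houseGraph D ∧ D ≠ {1, 4}

theorem houseGraph_isEDFamily : IsEDFamily houseGraph ↑houseGuardFamily := by
  simp only [IsEDFamily, Finset.mem_coe]
  decide

theorem card_of_mem_houseGuardFamily {D : Finset (Fin 5)} (hD : D ∈ houseGuardFamily) :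
    D.card = 2 :=
  (Finset.mem_powersetCard.mp (Finset.mem_filter.mp hD).1).2

def houseCliqueCover : houseGraphᶜ.Coloring (Fin 2) :=
  Coloring.mk (fun v => if v = 2 ∨ v = 3 then 1 else 0) (by decide)

theorem houseGraph_not_isDomSet_after_defending_zero :
    ∀ u ∈ ({1, 4} : Finset (Fin 5)), houseGraph.Adj u 0 →
      ¬ IsDomSet houseGraph (insert 0 (({1, 4} : Finset (Fin 5)).erase u)) := by
  decide

/-- The house graph satisfies `γ = γ∞ = θ = 2`, yet the minimum dominating set
`{u₁, u₄}` is not an eternal dominating set. -/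
theorem houseGraph_not_eternal :
    domNum houseGraph = 2 ∧ eternalDomNum houseGraph = 2 ∧
    cliqueCoverNum houseGraph = 2 ∧
    IsDomSet houseGraph {1, 4} ∧
    ¬ IsEternalDomSet houseGraph ({1, 4} : Finset (Fin 5)) := by
  have hdom : IsDomSet houseGraph {1, 4} := by decide
  have hγ : domNum houseGraph = 2 :=
    domNum_eq_card hdom houseGraph_two_le_card_of_isDomSet
  have hγe : eternalDomNum houseGraph = 2 :=
    le_antisymm
      (houseGraph_isEDFamily.eternalDomNum_le ⟨{2, 4}, by decide⟩
        fun _ => card_of_mem_houseGuardFamily)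
      (hγ ▸ domNum_le_eternalDomNum)
  have hθ : cliqueCoverNum houseGraph = 2 :=
    le_antisymm (cliqueCoverNum_le houseCliqueCover)
      (two_le_cliqueCoverNum (by decide : (0 : Fin 5) ≠ 2) (by decide))
  refine ⟨hγ, hγe, hθ, hdom, fun heternal => ?_⟩
  obtain ⟨u, hu, hadj, hdefended⟩ := heternal.exists_defence (v := 0) (by decide)
  exact houseGraph_not_isDomSet_after_defending_zero u hu hadj hdefended.isDomSet
end
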